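/- arXiv:1211.2308 — 4 statements merged into one kernel-verified Lean document; each statement's English description precedes it below -/
import Mathlib

section
/- Let R be a commutative ring, I an ideal, and θ, ω two sets of derivations of R such that: (1) I is ω-invariant, i.e., ω[I] ⊆ I; and (2) for every D ∈ ω and X ∈ θ, the Lie bracket [D,X] lies in the R-module generated by θ ∪ ω. Define H(0) = I and H(i+1) = H(i) + θ[H(i)]. Then every ideal H(i) is ω-invariant, i.e., ω[H(i)] ⊆ H(i) for all i. -/
/-!
Induction on `i`. For `D ∈ ω`, `X ∈ θ` and `g ∈ H i` one has `D (X g) = ⁅D, X⁆ g + X (D g)`.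
By the induction hypothesis `D g ∈ H i`, so `X (D g) ∈ θ[H i]`; and `⁅D, X⁆` is an `R`-combination
of elements of `θ` (sending `g` into `θ[H i]`) and of `ω` (sending `g` into `H i`).
The Leibniz rule then extends this from the generators `X g` to all of `θ[H i]`.
-/

/-- The ideal generated by `{X f : X ∈ θ, f ∈ J}`. -/
def derSetIdeal {R : Type*} [CommRing R] (θ : Set (Derivation ℤ R R)) (J : Ideal R) : Ideal R :=
  Ideal.span {y | ∃ D ∈ θ, ∃ f ∈ J, y = D f}

namespace Derivation

theorem apply_mem_of_mem_span {R A M : Type*} [CommSemiring R] [CommSemiring A]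
    [AddCommMonoid M] [Algebra R A] [Module A M] [Module R M] [IsScalarTower R A M]
    {S : Set (Derivation R A M)} {N : Submodule A M} {E : Derivation R A M} {a : A}
    (hS : ∀ Y ∈ S, Y a ∈ N) (hE : E ∈ Submodule.span A S) : E a ∈ N := by
  induction hE using Submodule.span_induction with
  | mem Y hY => exact hS Y hY
  | zero => exact N.zero_mem
  | add Y Z _ _ hY hZ => exact N.add_mem hY hZ
  | smul r Y _ hY => exact N.smul_mem r hY

theorem apply_mem_of_mem_ideal_span {R A : Type*} [CommSemiring R] [CommSemiring A]
    [Algebra R A] (D : Derivation R A A) {s : Set A} {K : Ideal A}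
    (hsK : Ideal.span s ≤ K) (hD : ∀ y ∈ s, D y ∈ K) {f : A} (hf : f ∈ Ideal.span s) :
    D f ∈ K := by
  induction hf using Submodule.span_induction with
  | mem y hy => exact hD y hy
  | zero => simp
  | add x y _ _ hx hy => rw [map_add]; exact K.add_mem hx hy
  | smul r x hx hDx =>
    rw [smul_eq_mul, leibniz, smul_eq_mul, smul_eq_mul]
    exact K.add_mem (K.mul_mem_left r hDx) (K.mul_mem_right (D r) (hsK hx))

end Derivation

def Ideal.IsDerivationInvariant {R : Type*} [CommRing R] (ω : Set (Derivation ℤ R R))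
    (J : Ideal R) : Prop :=
  ∀ D ∈ ω, ∀ f ∈ J, D f ∈ J

section DerSetIdeal

variable {R : Type*} [CommRing R] {θ ω : Set (Derivation ℤ R R)} {J : Ideal R}

theorem apply_mem_derSetIdeal {X : Derivation ℤ R R} (hX : X ∈ θ) {f : R} (hf : f ∈ J) :
    X f ∈ derSetIdeal θ J :=
  Ideal.subset_span ⟨X, hX, f, hf, rfl⟩

theorem apply_mem_sup_derSetIdeal_of_mem_span (hJ : J.IsDerivationInvariant ω)
    {E : Derivation ℤ R R} (hE : E ∈ Submodule.span R (θ ∪ ω)) {f : R} (hf : f ∈ J) :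
    E f ∈ J + derSetIdeal θ J := by
  refine Derivation.apply_mem_of_mem_span ?_ hE
  rintro Y (hY | hY)
  · exact Ideal.mem_sup_right (apply_mem_derSetIdeal hY hf)
  · exact Ideal.mem_sup_left (hJ Y hY f hf)

theorem apply_mem_sup_derSetIdeal (hJ : J.IsDerivationInvariant ω)
    (hbr : ∀ D ∈ ω, ∀ X ∈ θ, ⁅D, X⁆ ∈ Submodule.span R (θ ∪ ω))
    {D : Derivation ℤ R R} (hD : D ∈ ω) {f : R} (hf : f ∈ derSetIdeal θ J) :
    D f ∈ J + derSetIdeal θ J := by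
  refine D.apply_mem_of_mem_ideal_span le_sup_right ?_ hf
  rintro _ ⟨X, hX, g, hg, rfl⟩
  have hDX : D (X g) = ⁅D, X⁆ g + X (D g) := by
    rw [Derivation.commutator_apply]; ring
  rw [hDX]
  exact add_mem (apply_mem_sup_derSetIdeal_of_mem_span hJ (hbr D hD X hX) hg)
    (Ideal.mem_sup_right (apply_mem_derSetIdeal hX (hJ D hD g hg)))

theorem Ideal.IsDerivationInvariant.sup_derSetIdeal (hJ : J.IsDerivationInvariant ω)
    (hbr : ∀ D ∈ ω, ∀ X ∈ θ, ⁅D, X⁆ ∈ Submodule.span R (θ ∪ ω)) :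
    (J + derSetIdeal θ J).IsDerivationInvariant ω := by
  intro D hD f hf
  obtain ⟨a, ha, b, hb, rfl⟩ := Submodule.mem_sup.mp hf
  rw [map_add]
  exact add_mem (Ideal.mem_sup_left (hJ D hD a ha)) (apply_mem_sup_derSetIdeal hJ hbr hD hb)

end DerSetIdeal

/-- if `I` is `ω`-invariant and all brackets `⁅D, X⁆` (`D ∈ ω`, `X ∈ θ`)
lie in the `R`-module generated by `θ ∪ ω`, then every ideal of the chain
`H 0 = I`, `H (i+1) = H i + θ[H i]` is `ω`-invariant. -/
theorem tangency_chain_omega_invariant {R : Type*} [CommRing R]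
    (θ ω : Set (Derivation ℤ R R)) (I : Ideal R)
    (hinv : ∀ D ∈ ω, ∀ f ∈ I, D f ∈ I)
    (hbr : ∀ D ∈ ω, ∀ X ∈ θ, ⁅D, X⁆ ∈ Submodule.span R (θ ∪ ω))
    (H : ℕ → Ideal R)
    (h0 : H 0 = I) (hs : ∀ i, H (i + 1) = H i + derSetIdeal θ (H i)) :
    ∀ i, ∀ D ∈ ω, ∀ f ∈ H i, D f ∈ H i := by
  intro i
  induction i with
  | zero => rw [h0]; exact hinv
  | succ i ih => rw [hs i]; exact Ideal.IsDerivationInvariant.sup_derSetIdeal ih hbr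
end

section
/- Let K be a field of characteristic zero, R = K[[x, y₁, ..., y_{n-1}]] the formal power series ring, and X = ∂/∂x. Let I be an ideal of R invariant under X (i.e., X(I) ⊆ I) that is closed with respect to the topology of coefficient-wise convergence. If f = Σ_{i≥0} h_i(y) x^i belongs to I, where each h_i ∈ K[[y₁,...,y_{n-1}]], then every coefficient h_i(y) belongs to I. -/
/-!
The operator `1 - x ∂ₓ / m` preserves an ideal stable under `∂ₓ` and scales the coefficient of
`xʲ` by `1 - j / m`. Composing these operators for `m = 1, …, N` keeps the constant coefficient
and kills those of `x, …, x^N`, so `C (h₀)` is a limit of elements of `I`. For general `i`,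
`i! hᵢ` is the constant coefficient of `∂ₓⁱ f ∈ I`, and `i!` is invertible in characteristic zero.
-/

open PowerSeries

namespace PowerSeries

variable {A : Type*} [CommRing A]

theorem coeff_X_mul_derivative (g : A⟦X⟧) (j : ℕ) :
    coeff j (X * d⁄dX A g) = j * coeff j g := by
  cases j with
  | zero => simp
  | succ m => rw [coeff_succ_X_mul, coeff_derivative]; push_cast; ring

theorem coeff_sub_smul_X_mul_derivative [Algebra ℚ A] (q : ℚ) (g : A⟦X⟧) (j : ℕ) :
    coeff j (g - q • (X * d⁄dX A g)) = (1 - q * j) • coeff j g := by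
  rw [map_sub, coeff_smul, coeff_X_mul_derivative, sub_smul, one_smul, mul_smul,
    ← nsmul_eq_mul, Nat.cast_smul_eq_nsmul]

variable {I : Ideal A⟦X⟧} (hD : ∀ f ∈ I, d⁄dX A f ∈ I)
include hD

theorem iterate_derivative_mem {f : A⟦X⟧} (hf : f ∈ I) (k : ℕ) : (d⁄dX A)^[k] f ∈ I := by
  induction k with
  | zero => exact hf
  | succ k ih => rw [Function.iterate_succ_apply']; exact hD _ ih

theorem exists_mem_coeff_zero_eq_and_coeff_eq_zero [Algebra ℚ A] {f : A⟦X⟧} (hf : f ∈ I)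
    (N : ℕ) : ∃ h ∈ I, coeff 0 h = coeff 0 f ∧ ∀ j, 1 ≤ j → j ≤ N → coeff j h = 0 := by
  induction N with
  | zero => exact ⟨f, hf, rfl, fun j h₁ h₂ => by omega⟩
  | succ N ih =>
    obtain ⟨h, hI, h_zero, h_vanish⟩ := ih
    set q : ℚ := (N + 1 : ℚ)⁻¹
    refine ⟨h - q • (X * d⁄dX A h),
      sub_mem hI (Submodule.smul_of_tower_mem _ q (I.mul_mem_left X (hD h hI))), ?_, ?_⟩
    · simpa [coeff_sub_smul_X_mul_derivative] using h_zero
    · intro j h₁ h₂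
      rw [coeff_sub_smul_X_mul_derivative]
      rcases Nat.lt_or_eq_of_le h₂ with hlt | rfl
      · rw [h_vanish j h₁ (by omega), smul_zero]
      · have : 1 - q * (N + 1 : ℕ) = 0 := by
          push_cast; rw [inv_mul_cancel₀ (by positivity), sub_self]
        rw [this, zero_smul]

variable (hclosed : ∀ g : A⟦X⟧,
  (∀ N : ℕ, ∃ h ∈ I, ∀ i ≤ N, coeff i h = coeff i g) → g ∈ I)
include hclosed

theorem C_coeff_zero_mem [Algebra ℚ A] {f : A⟦X⟧} (hf : f ∈ I) : C (coeff 0 f) ∈ I := by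
  refine hclosed _ fun N => ?_
  obtain ⟨h, hI, h_zero, h_vanish⟩ := exists_mem_coeff_zero_eq_and_coeff_eq_zero hD hf N
  refine ⟨h, hI, fun j hj => ?_⟩
  rcases j with _ | j
  · rwa [coeff_zero_C]
  · rw [coeff_C, if_neg j.succ_ne_zero, h_vanish _ (by omega) hj]

theorem C_coeff_mem [Algebra ℚ A] {f : A⟦X⟧} (hf : f ∈ I) (i : ℕ) : C (coeff i f) ∈ I := by
  have h := C_coeff_zero_mem hD hclosed (iterate_derivative_mem hD hf i)
  rw [coeff_zero_eq_constantCoeff_apply, constantCoeff_iterate_derivative, map_mul,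
    map_natCast, ← nsmul_eq_mul, ← Nat.cast_smul_eq_nsmul ℚ] at h
  have hi : (i.factorial : ℚ) ≠ 0 := by positivity
  simpa [smul_smul, inv_mul_cancel₀ hi] using Submodule.smul_of_tower_mem _ (i.factorial : ℚ)⁻¹ h

end PowerSeries

/-- in `R = K[[x, y₁, …, y_{n-1}]]` (realized as power series in `x` over
`S = K[[y₁, …, y_{n-1}]]`), if an ideal `I` is invariant under `∂/∂x` and closed for
coefficient-wise convergence, then all the coefficients `h_i(y)` of any `f ∈ I`
(viewed as constants in `x`) belong to `I`. -/
theorem coefficients_of_invariant_closed_ideal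
    {K : Type*} [Field K] [CharZero K] (n : ℕ)
    (I : Ideal (PowerSeries (MvPowerSeries (Fin (n - 1)) K)))
    (hX : ∀ f ∈ I, PowerSeries.derivative (MvPowerSeries (Fin (n - 1)) K) f ∈ I)
    (hclosed : ∀ g : PowerSeries (MvPowerSeries (Fin (n - 1)) K),
      (∀ N : ℕ, ∃ h ∈ I, ∀ i ≤ N,
        PowerSeries.coeff i h =
        PowerSeries.coeff i g) → g ∈ I) :
    ∀ f ∈ I, ∀ i : ℕ,
      PowerSeries.C
        (PowerSeries.coeff i f) ∈ I :=
  fun _ hf i => C_coeff_mem hX hclosed hf i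
end

section
/- Let R be a commutative ring, φ: R → S a ring homomorphism, X a derivation of R and Y a derivation of S such that Y∘φ = φ∘X (Y is φ-related to X). Then for every ideal I of R, the ideal generated in S by φ(X[I]) is contained in Y[I·S], where I·S is the extension of I and Y[J] denotes the ideal generated by {Y(g): g ∈ J}. Moreover φ((X[I] + I))·S = Y[I·S] + I·S when additionally the extension I·S is generated by φ(I) and S is generated as an algebra over φ(R) in a way that Y[I·S] + I·S absorbs such products (i.e., using the Leibniz rule: Y(a·φ(f)) = Y(a)φ(f) + aφ(X(f)) for f ∈ I). -/
/-! The inclusion `φ(X[I])·S ⊆ Y[I·S]` holds generator by generator, since `Y (φ f) = φ (X f)`.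
For the reverse inclusion modulo `I·S`, the Leibniz rule `Y (a * g) = a * Y g + g * Y a` shows that
a derivation maps an ideal generated by `s` into the ideal generated by `s` and its image; applied to
`s = φ(I)` this puts `Y[I·S]` inside `φ(X[I])·S + I·S`. -/

/-- The ideal generated by the image of an ideal under a derivation. -/
def derIdeal {R : Type*} [CommRing R] (D : Derivation ℤ R R) (I : Ideal R) : Ideal R :=
  Ideal.span {y | ∃ f ∈ I, y = D f}

theorem apply_mem_derIdeal {R : Type*} [CommRing R] (D : Derivation ℤ R R) {I : Ideal R}
    {f : R} (hf : f ∈ I) : D f ∈ derIdeal D I :=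
  Ideal.subset_span ⟨f, hf, rfl⟩

theorem derIdeal_le_iff {R : Type*} [CommRing R] {D : Derivation ℤ R R} {I J : Ideal R} :
    derIdeal D I ≤ J ↔ ∀ f ∈ I, D f ∈ J := by
  refine ⟨fun h f hf => h (apply_mem_derIdeal D hf), fun h => Ideal.span_le.mpr ?_⟩
  rintro _ ⟨f, hf, rfl⟩
  exact h f hf

theorem derIdeal_span_le {R : Type*} [CommRing R] (D : Derivation ℤ R R) (s : Set R) :
    derIdeal D (Ideal.span s) ≤ Ideal.span (D '' s) ⊔ Ideal.span s := by
  refine derIdeal_le_iff.mpr fun g hg => ?_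
  induction hg using Submodule.span_induction with
  | mem x hx => exact Ideal.mem_sup_left (Ideal.subset_span ⟨x, hx, rfl⟩)
  | zero => simp
  | add x y _ _ hx hy => simpa only [map_add] using Ideal.add_mem _ hx hy
  | smul a x hx hDx =>
    rw [smul_eq_mul, Derivation.leibniz, smul_eq_mul, smul_eq_mul]
    exact Ideal.add_mem _ (Ideal.mul_mem_left _ a hDx)
      (Ideal.mem_sup_right (Ideal.mul_mem_right _ _ hx))

section Related

variable {R S : Type*} [CommRing R] [CommRing S] {φ : R →+* S}
  {X : Derivation ℤ R R} {Y : Derivation ℤ S S}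

theorem map_derIdeal_le_derIdeal_map (hrel : ∀ r : R, Y (φ r) = φ (X r)) (I : Ideal R) :
    Ideal.map φ (derIdeal X I) ≤ derIdeal Y (Ideal.map φ I) := by
  refine Ideal.map_le_iff_le_comap.mpr (derIdeal_le_iff.mpr fun f hf => ?_)
  rw [Ideal.mem_comap, ← hrel]
  exact apply_mem_derIdeal Y (Ideal.mem_map_of_mem φ hf)

theorem derIdeal_map_le_map_derIdeal_sup (hrel : ∀ r : R, Y (φ r) = φ (X r)) (I : Ideal R) :
    derIdeal Y (Ideal.map φ I) ≤ Ideal.map φ (derIdeal X I) ⊔ Ideal.map φ I := by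
  refine (derIdeal_span_le Y _).trans (sup_le_sup_right (Ideal.span_le.mpr ?_) _)
  rintro _ ⟨_, ⟨f, hf, rfl⟩, rfl⟩
  rw [SetLike.mem_coe, hrel]
  exact Ideal.mem_map_of_mem φ (apply_mem_derIdeal X hf)

end Related

/-- if `Y` is `φ`-related to `X`, then `φ(X[I])·S ⊆ Y[I·S]`, and the
controlled identity `φ(X[I] + I)·S = Y[I·S] + I·S` holds (the affine version of the
compatibility of the first generalized Fitting operation with pull-backs). -/
theorem related_derivation_ideal_transform
    {R S : Type*} [CommRing R] [CommRing S] (φ : R →+* S)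
    (X : Derivation ℤ R R) (Y : Derivation ℤ S S)
    (hrel : ∀ r : R, Y (φ r) = φ (X r)) (I : Ideal R) :
    Ideal.map φ (derIdeal X I) ≤ derIdeal Y (Ideal.map φ I) ∧
      Ideal.map φ (derIdeal X I + I) =
        derIdeal Y (Ideal.map φ I) + Ideal.map φ I := by
  have hle := map_derIdeal_le_derIdeal_map hrel I
  refine ⟨hle, ?_⟩
  simp only [Submodule.add_eq_sup, Ideal.map_sup]
  exact le_antisymm (sup_le_sup_right hle _)
    (sup_le (derIdeal_map_le_map_derIdeal_sup hrel I) le_sup_right)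
end

section
/- Let K be ℝ or ℂ and R = K[[x₁,...,xₙ]] with maximal ideal m = (x₁,...,xₙ). Let θ be a set of d derivations X₁,...,X_d of R. If the d×d determinant det[Xᵢ(fⱼ)] is a unit of R for some f₁,...,f_d ∈ m, then the vectors (X₁(x₁)(0),...,X₁(xₙ)(0)), ..., (X_d(x₁)(0),...,X_d(xₙ)(0)) (the linear parts evaluated at the origin) are linearly independent over K; in particular each Xᵢ is nonsingular at the origin. -/
/-!
A derivation kills constants, and every power series is `f(0) + ∑ₖ xₖ gₖ` with `gₖ(0) = ∂f/∂xₖ(0)`;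
by the Leibniz rule `D f (0) = ∑ₖ ∂f/∂xₖ(0) · D xₖ (0)`. Hence the constant terms of the matrix
`[Xᵢ fⱼ]` factor as `L · C`, with `L` the matrix of linear parts of the `Xᵢ` and `C` the Jacobian
of the `fⱼ` at the origin. A unit determinant stays a unit at the origin, and `det (L C)` a unit
forces the rows of `L` to be linearly independent.
-/

open MvPowerSeries Finsupp

theorem Finsupp.isLeast_support_iff {σ : Type*} [LinearOrder σ] (e : σ →₀ ℕ) (k : σ) :
    IsLeast (e.support : Set σ) k ↔ single k 1 ≤ e ∧ ∀ j < k, e j = 0 := by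
  simp only [IsLeast, lowerBounds, Finset.mem_coe, mem_support_iff, single_le_iff,
    Set.mem_ofPred_eq, Nat.one_le_iff_ne_zero]
  refine and_congr_right fun _ => ⟨fun h j hj => ?_, fun h j hj => ?_⟩
  · by_contra hne; exact (h hne).not_gt hj
  · by_contra hlt; exact hj (h j (lt_of_not_ge hlt))

namespace MvPowerSeries

variable {σ R : Type*} [CommSemiring R]

theorem exists_eq_C_add_sum_X_mul [Fintype σ] (f : MvPowerSeries σ R) :
    ∃ g : σ → MvPowerSeries σ R, (∀ k, constantCoeff (g k) = coeff (single k 1) f) ∧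
      f = C (constantCoeff f) + ∑ k, X k * g k := by
  classical
  let : LinearOrder σ := LinearOrder.lift' _ (Fintype.equivFin σ).injective
  -- each monomial `x^e ≠ 1` of `f` is put into `xₖ gₖ` for `k` the least variable occurring in it
  let g : σ → MvPowerSeries σ R := fun k e =>
    if ∀ j < k, e j = 0 then coeff (e + single k 1) f else 0
  have coeff_g (k : σ) (e : σ →₀ ℕ) :
      coeff e (g k) = if ∀ j < k, e j = 0 then coeff (e + single k 1) f else 0 := rfl
  have coeff_X_mul_g (k : σ) (e : σ →₀ ℕ) :
      coeff e (X k * g k) = if IsLeast (e.support : Set σ) k then coeff e f else 0 := by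
    rw [X_def, coeff_monomial_mul, isLeast_support_iff, one_mul]
    by_cases hle : single k 1 ≤ e
    · have hsub (j) (hj : j < k) : (e - single k 1 : σ →₀ ℕ) j = e j := by
        simp [hj.ne']
      simp only [hle, true_and, if_true, coeff_g, tsub_add_cancel_of_le hle]
      exact if_congr (forall₂_congr fun j hj => by rw [hsub j hj]) rfl rfl
    · simp [hle]
  refine ⟨g, fun k => by simp [← coeff_zero_eq_constantCoeff_apply, coeff_g], ?_⟩
  ext e
  simp only [map_add, coeff_C, map_sum, coeff_X_mul_g]
  rcases eq_or_ne e 0 with rfl | he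
  · simp [IsLeast]
  · have hmin := e.support.isLeast_min' (support_nonempty_iff.mpr he)
    rw [Finset.sum_eq_single _ (fun k _ hk => if_neg fun hk' => hk (hk'.unique hmin))
      (fun h => (h (Finset.mem_univ _)).elim), if_pos hmin, if_neg he, zero_add]

theorem constantCoeff_derivation_apply [Fintype σ]
    (D : Derivation R (MvPowerSeries σ R) (MvPowerSeries σ R)) (f : MvPowerSeries σ R) :
    constantCoeff (D f) = ∑ k, coeff (single k 1) f * constantCoeff (D (X k)) := by
  obtain ⟨g, hg, hf⟩ := exists_eq_C_add_sum_X_mul f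
  conv_lhs => rw [hf]
  simp [c_eq_algebraMap, D.leibniz, hg]

end MvPowerSeries

theorem Matrix.linearIndependent_rows_of_isUnit_det_mul {m n R : Type*} [Fintype m]
    [Fintype n] [DecidableEq m] [CommRing R] (A : Matrix m n R) (B : Matrix n m R)
    (h : IsUnit (A * B).det) : LinearIndependent R A.row := by
  rw [← Matrix.vecMul_injective_iff]
  have hAB := Matrix.vecMul_injective_of_isUnit ((Matrix.isUnit_iff_isUnit_det _).2 h)
  refine Function.Injective.of_comp (f := B.vecMul) ?_
  convert hAB using 1
  funext v
  exact Matrix.vecMul_vecMul v A B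

theorem unit_fitting_det_implies_linear_independence_general
    {K : Type*} [RCLike K] (n d : ℕ)
    (D : Fin d → Derivation K (MvPowerSeries (Fin n) K) (MvPowerSeries (Fin n) K))
    (f : Fin d → MvPowerSeries (Fin n) K)
    (hdet : IsUnit (Matrix.of fun i j => D i (f j)).det) :
    LinearIndependent K
      (fun i : Fin d => fun j : Fin n => constantCoeff (D i (X j))) := by
  let L : Matrix (Fin d) (Fin n) K := .of fun i k => constantCoeff (D i (X k))
  let C : Matrix (Fin n) (Fin d) K := .of fun k j => coeff (single k 1) (f j)
  have hLC : (Matrix.of fun i j => D i (f j)).map constantCoeff = L * C := by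
    ext i j
    rw [Matrix.map_apply, Matrix.of_apply, constantCoeff_derivation_apply, Matrix.mul_apply]
    exact Finset.sum_congr rfl fun k _ => mul_comm _ _
  have hdetLC : IsUnit (L * C).det := by
    rw [← hLC, ← RingHom.mapMatrix_apply, ← RingHom.map_det]
    exact hdet.map _
  exact L.linearIndependent_rows_of_isUnit_det_mul C hdetLC

/-- in `R = K[[x₁, …, xₙ]]` (`K = ℝ` or `ℂ`), if for derivations
`X₁, …, X_d` and elements `f₁, …, f_d` of the maximal ideal the determinant
`det [Xᵢ (fⱼ)]` is a unit, then the linear parts of the `Xᵢ` at the origin, i.e. the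
vectors `(Xᵢ(x₁)(0), …, Xᵢ(xₙ)(0))`, are linearly independent over `K`. -/
theorem unit_fitting_det_implies_linear_independence
    {K : Type*} [RCLike K] (n d : ℕ)
    (D : Fin d → Derivation K (MvPowerSeries (Fin n) K) (MvPowerSeries (Fin n) K))
    (f : Fin d → MvPowerSeries (Fin n) K)
    (hf : ∀ j, constantCoeff (f j) = 0)
    (hdet : IsUnit (Matrix.of fun i j => D i (f j)).det) :
    LinearIndependent K
      (fun i : Fin d => fun j : Fin n => constantCoeff (D i (X j))) :=
  unit_fitting_det_implies_linear_independence_general n d D f hdet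
end
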